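/- arXiv:2507.05844 — 3 statements merged into one kernel-verified Lean document; each statement's English description precedes it below -/
import Mathlib

section
/- Let m and n be positive integers, let v_1, …, v_n be vectors in ℝ^m, and let a_k ≤ b_k and a'_k ≤ b'_k be real numbers for k = 1,…,n. Let Z = { ∑_{k=1}^n t_k • v_k : t_k ∈ [a_k, b_k] } and Z' = { ∑_{k=1}^n t_k • v_k : t_k ∈ [a'_k, b'_k] }. Then the Hausdorff distance between Z and Z' is at most ∑_{k=1}^n max(|a_k − a'_k|, |b_k − b'_k|) · ‖v_k‖. -/
/-- Clamping a point of `[a,b]` into `[a',b']` moves it by at most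
`max |a - a'| |b - b'|`. -/
lemma zonotope_clamp_aux (a b a' b' t : ℝ) (hab' : a' ≤ b')
    (ht : t ∈ Set.Icc a b) :
    ∃ s ∈ Set.Icc a' b', |t - s| ≤ max |a - a'| |b - b'| := by
  obtain ⟨ht1, ht2⟩ := ht
  refine ⟨max a' (min b' t), ⟨le_max_left _ _, max_le hab' (min_le_left _ _)⟩, ?_⟩
  rcases le_or_gt t a' with h | h
  · have hs : max a' (min b' t) = a' := by
      rw [min_eq_right (h.trans hab'), max_eq_left h]
    rw [hs, abs_of_nonpos (by linarith)]
    have : -(t - a') ≤ |a - a'| := by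
      rw [abs_sub_comm]
      calc -(t - a') = a' - t := by ring
        _ ≤ a' - a := by linarith
        _ ≤ |a' - a| := le_abs_self _
    exact this.trans (le_max_left _ _)
  · rcases le_or_gt b' t with h2 | h2
    · have hs : max a' (min b' t) = b' := by
        rw [min_eq_left h2, max_eq_right hab']
      rw [hs, abs_of_nonneg (by linarith)]
      have : t - b' ≤ |b - b'| := by
        calc t - b' ≤ b - b' := by linarith
          _ ≤ |b - b'| := le_abs_self _
      exact this.trans (le_max_right _ _)
    · have hs : max a' (min b' t) = t := by
        rw [min_eq_right h2.le, max_eq_right h.le]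
      rw [hs]
      simp [abs_nonneg]

lemma zonotope_dist_aux (m n : ℕ) (v : Fin n → EuclideanSpace ℝ (Fin m))
    (t s : Fin n → ℝ) (r : Fin n → ℝ) (h : ∀ k, |t k - s k| ≤ r k) :
    dist (∑ k, t k • v k) (∑ k, s k • v k) ≤ ∑ k, r k * ‖v k‖ := by
  rw [dist_eq_norm, ← Finset.sum_sub_distrib]
  calc ‖∑ k, (t k • v k - s k • v k)‖ ≤ ∑ k, ‖t k • v k - s k • v k‖ :=
        norm_sum_le _ _
    _ = ∑ k, |t k - s k| * ‖v k‖ := by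
        refine Finset.sum_congr rfl fun k _ => ?_
        rw [← sub_smul, norm_smul, Real.norm_eq_abs]
    _ ≤ ∑ k, r k * ‖v k‖ := by
        refine Finset.sum_le_sum fun k _ => ?_
        exact mul_le_mul_of_nonneg_right (h k) (norm_nonneg _)

/-- Quantitative Hausdorff-distance estimate between two zonotopes with the same generators:
`d_H(Z, Z') ≤ ∑ k, max |a k - a' k| |b k - b' k| * ‖v k‖`. -/
theorem zonotope_hausdorffDist_le (m n : ℕ) (hm : 0 < m) (hn : 0 < n)
    (v : Fin n → EuclideanSpace ℝ (Fin m))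
    (a b a' b' : Fin n → ℝ) (hab : ∀ k, a k ≤ b k) (hab' : ∀ k, a' k ≤ b' k) :
    Metric.hausdorffDist
      {z : EuclideanSpace ℝ (Fin m) |
        ∃ t : Fin n → ℝ, (∀ k, t k ∈ Set.Icc (a k) (b k)) ∧ z = ∑ k, t k • v k}
      {z : EuclideanSpace ℝ (Fin m) |
        ∃ t : Fin n → ℝ, (∀ k, t k ∈ Set.Icc (a' k) (b' k)) ∧ z = ∑ k, t k • v k}
    ≤ ∑ k, max |a k - a' k| |b k - b' k| * ‖v k‖ := by
  have hr : 0 ≤ ∑ k, max |a k - a' k| |b k - b' k| * ‖v k‖ :=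
    Finset.sum_nonneg fun k _ => mul_nonneg (le_trans (abs_nonneg _) (le_max_left _ _))
      (norm_nonneg _)
  apply Metric.hausdorffDist_le_of_mem_dist hr
  · rintro x ⟨t, ht, rfl⟩
    choose s hs hd using fun k => zonotope_clamp_aux (a k) (b k) (a' k) (b' k) (t k)
      (hab' k) (ht k)
    exact ⟨∑ k, s k • v k, ⟨s, hs, rfl⟩, zonotope_dist_aux m n v t s _ hd⟩
  · rintro x ⟨t, ht, rfl⟩
    choose s hs hd using fun k => zonotope_clamp_aux (a' k) (b' k) (a k) (b k) (t k)
      (hab k) (ht k)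
    refine ⟨∑ k, s k • v k, ⟨s, hs, rfl⟩, ?_⟩
    have := zonotope_dist_aux m n v t s _ hd
    refine this.trans (Finset.sum_le_sum fun k _ => mul_le_mul_of_nonneg_right ?_ (norm_nonneg _))
    rw [abs_sub_comm (a' k) (a k), abs_sub_comm (b' k) (b k)]
end

section
/- Let X be a topological space, m a positive integer, and for k = 1,…,m let a_k, b_k : X → ℝ be continuous functions with a_k(x) ≤ b_k(x) for all x ∈ X, and let v_1, …, v_m be vectors in ℝ^m. Define U(x) = { ∑_{k=1}^m t_k • v_k : t_k ∈ [a_k(x), b_k(x)] for each k }, which is a nonempty compact subset of ℝ^m for each x. Then the map x ↦ U(x), viewed as a map from X into the space of nonempty compact subsets of ℝ^m equipped with the Hausdorff metric, is continuous. -/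
open Metric

lemma zonotope_clamp_approx (m : ℕ)
    (ax bx ay by' : Fin m → ℝ) (v : Fin m → EuclideanSpace ℝ (Fin m)) (δ : ℝ)
    (hy : ∀ k, ay k ≤ by' k)
    (hd : ∀ k, |ax k - ay k| ≤ δ ∧ |bx k - by' k| ≤ δ)
    (t : Fin m → ℝ) (ht : ∀ k, t k ∈ Set.Icc (ax k) (bx k)) :
    ∃ t' : Fin m → ℝ, (∀ k, t' k ∈ Set.Icc (ay k) (by' k)) ∧
      dist (∑ k, t k • v k) (∑ k, t' k • v k) ≤ δ * ∑ k, ‖v k‖ := by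
  refine ⟨fun k => max (ay k) (min (by' k) (t k)), fun k =>
    ⟨le_max_left _ _, max_le (hy k) (min_le_left _ _)⟩, ?_⟩
  have key : ∀ k, |t k - max (ay k) (min (by' k) (t k))| ≤ δ := by
    intro k
    obtain ⟨h1, h2⟩ := hd k
    obtain ⟨h3, h4⟩ := ht k
    rw [abs_le] at h1 h2 ⊢
    rcases le_total (t k) (ay k) with h | h
    · rw [min_eq_right (h.trans (hy k)), max_eq_left h]
      constructor <;> linarith
    · rcases le_total (t k) (by' k) with h' | h'
      · rw [min_eq_right h', max_eq_right h]
        constructor <;> linarith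
      · rw [min_eq_left h', max_eq_right (hy k)]
        constructor <;> linarith
  calc dist (∑ k, t k • v k) (∑ k, max (ay k) (min (by' k) (t k)) • v k)
      = ‖∑ k, (t k - max (ay k) (min (by' k) (t k))) • v k‖ := by
        rw [dist_eq_norm, ← Finset.sum_sub_distrib]
        exact congrArg _ (Finset.sum_congr rfl fun k _ => (sub_smul _ _ _).symm)
    _ ≤ ∑ k, ‖(t k - max (ay k) (min (by' k) (t k))) • v k‖ := norm_sum_le _ _
    _ ≤ ∑ k, δ * ‖v k‖ := by
        refine Finset.sum_le_sum fun k _ => ?_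
        rw [norm_smul, Real.norm_eq_abs]
        exact mul_le_mul_of_nonneg_right (key k) (norm_nonneg _)
    _ = δ * ∑ k, ‖v k‖ := by rw [Finset.mul_sum]

/-- Continuity of the zonotope-valued utility: if the endpoint functions `a k, b k : X → ℝ`
are continuous with `a k x ≤ b k x`, then the map sending `x` to the zonotope
`⨁ₖ [a k x, b k x] • v k`, viewed as a map into the space of nonempty compact subsets of
`ℝ^m` with the Hausdorff metric, is continuous. -/
theorem zonotope_valued_utility_continuous (X : Type*) [TopologicalSpace X]
    (m : ℕ) (hm : 0 < m)
    (a b : Fin m → X → ℝ)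
    (ha : ∀ k, Continuous (a k)) (hb : ∀ k, Continuous (b k))
    (hab : ∀ k x, a k x ≤ b k x)
    (v : Fin m → EuclideanSpace ℝ (Fin m))
    (U : X → TopologicalSpace.NonemptyCompacts (EuclideanSpace ℝ (Fin m)))
    (hU : ∀ x, (U x : Set (EuclideanSpace ℝ (Fin m))) =
      {z : EuclideanSpace ℝ (Fin m) |
        ∃ t : Fin m → ℝ, (∀ k, t k ∈ Set.Icc (a k x) (b k x)) ∧ z = ∑ k, t k • v k}) :
    Continuous U := by
  set C : ℝ := ∑ k, ‖v k‖ with hC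
  have hC0 : 0 ≤ C := Finset.sum_nonneg fun k _ => norm_nonneg _
  rw [continuous_iff_continuousAt]
  intro x
  rw [ContinuousAt, Metric.tendsto_nhds]
  intro ε hε
  set δ : ℝ := ε / (2 * (C + 1)) with hδ
  have hδ0 : 0 < δ := by positivity
  have hev : ∀ᶠ y in nhds x, ∀ k, |a k y - a k x| ≤ δ ∧ |b k y - b k x| ≤ δ := by
    rw [Filter.eventually_all]
    intro k
    have h1 : ∀ᶠ y in nhds x, |a k y - a k x| ≤ δ := by
      have := (ha k).continuousAt (x := x)
      rw [ContinuousAt, Metric.tendsto_nhds] at this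
      filter_upwards [this δ hδ0] with y hy
      rw [Real.dist_eq] at hy; exact hy.le
    have h2 : ∀ᶠ y in nhds x, |b k y - b k x| ≤ δ := by
      have := (hb k).continuousAt (x := x)
      rw [ContinuousAt, Metric.tendsto_nhds] at this
      filter_upwards [this δ hδ0] with y hy
      rw [Real.dist_eq] at hy; exact hy.le
    filter_upwards [h1, h2] with y hy1 hy2 using ⟨hy1, hy2⟩
  filter_upwards [hev] with y hy
  have hHD : hausdorffDist (U y : Set (EuclideanSpace ℝ (Fin m))) (U x) ≤ δ * C := by
    apply hausdorffDist_le_of_mem_dist (by positivity)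
    · intro z hz
      rw [hU y] at hz
      obtain ⟨t, ht, rfl⟩ := hz
      obtain ⟨t', ht', hdist⟩ := zonotope_clamp_approx m (a · y) (b · y) (a · x) (b · x) v δ
        (fun k => hab k x) hy t ht
      exact ⟨∑ k, t' k • v k, by rw [hU x]; exact ⟨t', ht', rfl⟩, hdist⟩
    · intro z hz
      rw [hU x] at hz
      obtain ⟨t, ht, rfl⟩ := hz
      obtain ⟨t', ht', hdist⟩ := zonotope_clamp_approx m (a · x) (b · x) (a · y) (b · y) v δ
        (fun k => hab k y) (fun k => by
          obtain ⟨h1, h2⟩ := hy k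
          rw [abs_sub_comm] at h1 h2
          exact ⟨h1, h2⟩) t ht
      exact ⟨∑ k, t' k • v k, by rw [hU y]; exact ⟨t', ht', rfl⟩, hdist⟩
  rw [Metric.NonemptyCompacts.dist_eq]
  calc hausdorffDist (U y : Set (EuclideanSpace ℝ (Fin m))) (U x) ≤ δ * C := hHD
    _ < ε := by
        rw [hδ]
        rw [div_mul_eq_mul_div, div_lt_iff₀ (by positivity)]
        nlinarith
end

section
/- Let X be a countable set and let ≻ be an irreflexive binary relation on X satisfying the Ferrers property: for all x, y, z, w ∈ X, if x ≻ y and z ≻ w then x ≻ w or z ≻ y. Then there exist functions u, v : X → ℝ with u(x) ≤ v(x) for all x ∈ X such that for all x, y ∈ X, x ≻ y if and only if u(x) > v(y). -/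
/-- Fishburn's interval-order representation theorem on a countable set: every irreflexive
relation with the Ferrers property admits a representation by real intervals `[u x, v x]`,
with `x ≻ y` iff `u x > v y`. -/
theorem interval_order_representation (X : Type*) [Countable X]
    (r : X → X → Prop)
    (hirr : ∀ x, ¬ r x x)
    (hferrers : ∀ x y z w, r x y → r z w → r x w ∨ r z y) :
    ∃ u v : X → ℝ, (∀ x, u x ≤ v x) ∧ ∀ x y, r x y ↔ u x > v y := by
  obtain ⟨f, hf⟩ := exists_injective_nat X
  set g : X → ℝ := fun z => (1 / 2 : ℝ) ^ (f z) with hg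
  have hgpos : ∀ z, 0 < g z := fun z => by positivity
  have hgsum : Summable g := summable_geometric_two.comp_injective hf
  set μ : Set X → ℝ := fun S => ∑' z, S.indicator g z with hμ
  have hsum_ind : ∀ S : Set X, Summable (S.indicator g) := fun S => hgsum.indicator S
  have hmono : ∀ S T : Set X, S ⊆ T → μ S ≤ μ T := by
    intro S T h
    exact Summable.tsum_le_tsum
      (fun z => Set.indicator_le_indicator_of_subset h (fun a => (hgpos a).le) z)
      (hsum_ind S) (hsum_ind T)
  have hbound : ∀ S : Set X, μ S ≤ ∑' z, g z := by
    intro S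
    exact Summable.tsum_le_tsum (fun z => Set.indicator_le_self' (fun a _ => (hgpos a).le) z) (hsum_ind S) hgsum
  -- singleton measure
  have hsingle : ∀ y : X, μ {y} = g y := by
    intro y
    have h1 : ∀ b : X, b ≠ y → ({y} : Set X).indicator g b = 0 := by
      intro b hb
      exact Set.indicator_of_notMem (by simpa using hb) g
    calc μ {y} = ({y} : Set X).indicator g y := tsum_eq_single y h1
    _ = g y := Set.indicator_of_mem rfl g
  -- union with a new point
  have hunion : ∀ (S : Set X) (y : X), y ∉ S → μ (S ∪ {y}) = μ S + g y := by
    intro S y hy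
    have hdisj : Disjoint S ({y} : Set X) := by
      simpa [Set.disjoint_singleton_right] using hy
    have : (S ∪ {y} : Set X).indicator g = S.indicator g + ({y} : Set X).indicator g :=
      Set.indicator_union_of_disjoint hdisj g
    rw [hμ]
    simp only [this, Pi.add_apply]
    rw [Summable.tsum_add (hsum_ind S) (hsum_ind {y})]
    rw [← hsingle y]
  set u : X → ℝ := fun x => μ {z | r x z} with hu
  set v : X → ℝ := fun y => sSup (u '' {x | ¬ r x y}) with hv
  have hne : ∀ y : X, (u '' {x | ¬ r x y}).Nonempty := fun y => ⟨u y, ⟨y, hirr y, rfl⟩⟩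
  have hbdd : ∀ y : X, BddAbove (u '' {x | ¬ r x y}) := by
    intro y
    refine ⟨∑' z, g z, ?_⟩
    rintro a ⟨x, -, rfl⟩
    exact hbound _
  -- key inequality
  have hkey : ∀ x y x', r x y → ¬ r x' y → u x' + g y ≤ u x := by
    intro x y x' hxy hx'y
    have hsub : {z | r x' z} ∪ {y} ⊆ {z | r x z} := by
      rintro z (hz | hz)
      · rcases hferrers x y x' z hxy hz with h | h
        · exact h
        · exact absurd h hx'y
      · simp only [Set.mem_singleton_iff] at hz
        subst hz
        exact hxy
    have hyns : y ∉ {z | r x' z} := hx'y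
    calc u x' + g y = μ ({z | r x' z} ∪ {y}) := (hunion _ y hyns).symm
    _ ≤ μ {z | r x z} := hmono _ _ hsub
    _ = u x := rfl
  refine ⟨u, v, ?_, ?_⟩
  · intro x
    exact le_csSup (hbdd x) ⟨x, hirr x, rfl⟩
  · intro x y
    constructor
    · intro hxy
      have hle : v y ≤ u x - g y := by
        apply csSup_le (hne y)
        rintro a ⟨x', hx', rfl⟩
        linarith [hkey x y x' hxy hx']
      have := hgpos y
      linarith
    · intro h
      by_contra hxy
      have : u x ≤ v y := le_csSup (hbdd y) ⟨x, hxy, rfl⟩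
      linarith [lt_of_lt_of_le h this]
end
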